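/- Consider the 1D3P model with B = {−, 0, +}, ĵ = B∖{j}, mean vertex coefficients V_p given by: V_p(B,B) = 1, V_p(∅,∅) = 1, V_p({i},{j}) = δ_{ij}, V_p({i},ĵ) = p(3δ_{ij} − 1), V_p(î,ĵ) = p + δ_{ij}(1−3p), and V_p(μ,ν) = 0 otherwise, and correlation vertex coefficients 𝒱(μ',ν') = Σ_{μ ⊆ μ'} Σ_{ν with ν' ⊆ ν ⊆ B} (−1)^(|μ'∖μ|) · f^(|μ'∖μ|) · f^(|ν∖ν'|) · V_p(μ,ν) for f ∈ ℝ. Define the linearized Boltzmann collision matrix J : B → B → ℝ by J(i,j) = 𝒱({i},{j}) − δ_{ij}. Then for every v : B → ℝ with v(−) + v(0) + v(+) = 0 and every i ∈ B, Σ_{j ∈ B} J(i,j)·v(j) = −3pf · v(i); that is, the kinetic eigenvalue of the linearized Boltzmann collision operator on the subspace orthogonal to the conserved particle density is λ² = −3pf. -/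

import Mathlib

/-- The three bits per site of the 1D3P lattice gas: left-moving, stationary,
and right-moving particles. -/
inductive OneD3P where
  | minus | zero | plus
deriving DecidableEq

instance : Fintype OneD3P :=
  ⟨{OneD3P.minus, OneD3P.zero, OneD3P.plus}, fun x => by cases x <;> simp⟩

/-- The mean vertex coefficients of the 1D3P model, given by the table
`V(B,B) = 1`, `V(∅,∅) = 1`, `V({i},{j}) = δ_{ij}`,
`V({i},ĵ) = p(3δ_{ij} − 1)`, `V(î,ĵ) = p + δ_{ij}(1−3p)`, and `V(μ,ν) = 0`
otherwise.  (For `μ = {i}`, `ν = ĵ` one has `i = j ↔ μ ∩ ν = ∅`; for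
`μ = î`, `ν = ĵ` one has `i = j ↔ μ = ν`.) -/
def OneD3P.V (p : ℝ) (μ ν : Finset OneD3P) : ℝ :=
  if μ = Finset.univ ∧ ν = Finset.univ then 1
  else if μ = ∅ ∧ ν = ∅ then 1
  else if μ.card = 1 ∧ ν.card = 1 then (if μ = ν then 1 else 0)
  else if μ.card = 1 ∧ ν.card = 2 then
    p * (3 * (if μ ∩ ν = ∅ then (1 : ℝ) else 0) - 1)
  else if μ.card = 2 ∧ ν.card = 2 then
    p + (if μ = ν then (1 : ℝ) else 0) * (1 - 3 * p)
  else 0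

/-- The correlation vertex coefficients of the 1D3P model with uniform
equilibrium occupation `f`:
`𝒱(μ',ν') = Σ_{μ ⊆ μ'} Σ_{ν' ⊆ ν ⊆ B} (−1)^|μ'∖μ| f^|μ'∖μ| f^|ν∖ν'| V(μ,ν)`. -/
def OneD3P.cV (p f : ℝ) (μ' ν' : Finset OneD3P) : ℝ :=
  ∑ μ ∈ μ'.powerset,
    ∑ ν ∈ Finset.univ.filter (fun ν : Finset OneD3P => ν' ⊆ ν),
      (-1 : ℝ) ^ (μ' \ μ).card * f ^ (μ' \ μ).card * f ^ (ν \ ν').card *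
        OneD3P.V p μ ν

/-- The linearized Boltzmann collision matrix `J(i,j) = 𝒱({i},{j}) − δ_{ij}`
of the 1D3P model. -/
def OneD3P.J (p f : ℝ) (i j : OneD3P) : ℝ :=
  OneD3P.cV p f {i} {j} - (if i = j then 1 else 0)

open OneD3P in
lemma oneD3P_cV_singleton (p f : ℝ) (i j : OneD3P) :
    cV p f {i} {j} = (if i = j then 1 else 0) + p * f
      - 3 * p * f * (if i = j then 1 else 0) := by
  have hm : Finset.univ.filter (fun ν : Finset OneD3P => {minus} ⊆ ν)
      = {({minus} : Finset OneD3P), {minus, zero}, {minus, plus}, {minus, zero, plus}} := by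
    decide
  have hz : Finset.univ.filter (fun ν : Finset OneD3P => {zero} ⊆ ν)
      = {({zero} : Finset OneD3P), {minus, zero}, {zero, plus}, {minus, zero, plus}} := by
    decide
  have hp : Finset.univ.filter (fun ν : Finset OneD3P => {plus} ⊆ ν)
      = {({plus} : Finset OneD3P), {minus, plus}, {zero, plus}, {minus, zero, plus}} := by
    decide
  fin_cases i <;> fin_cases j <;>
  · rw [cV]
    rw [show ∀ k : OneD3P, ({k} : Finset OneD3P).powerset = {∅, {k}} from by decide]
    first | rw [hm] | rw [hz] | rw [hp]
    simp (discharger := decide) only [Finset.sum_insert, Finset.sum_singleton]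
    simp (config := { decide := true }) [V,
      show (({minus, zero} : Finset OneD3P) \ {minus}).card = 1 from by decide,
      show (({minus, plus} : Finset OneD3P) \ {minus}).card = 1 from by decide,
      show (({minus, zero} : Finset OneD3P) \ {zero}).card = 1 from by decide,
      show (({zero, plus} : Finset OneD3P) \ {zero}).card = 1 from by decide,
      show (({minus, plus} : Finset OneD3P) \ {plus}).card = 1 from by decide,
      show (({zero, plus} : Finset OneD3P) \ {plus}).card = 1 from by decide]
    try ring

open OneD3P in
lemma oneD3P_J_eq (p f : ℝ) (i j : OneD3P) :
    J p f i j = p * f - 3 * p * f * (if i = j then 1 else 0) := by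
  rw [J, oneD3P_cV_singleton]; ring

open OneD3P in
/-- The kinetic eigenvalue of the linearized Boltzmann collision operator of
the 1D3P lattice gas on the subspace orthogonal to the conserved particle
density is `λ² = −3pf`. -/
theorem oneD3P_boltzmann_kinetic_eigenvalue (p f : ℝ) :
    ∀ v : OneD3P → ℝ, v minus + v zero + v plus = 0 →
      ∀ i : OneD3P, ∑ j : OneD3P, J p f i j * v j = -3 * p * f * v i := by
  intro v hv i
  have h : ∀ j : OneD3P, J p f i j = p * f - 3 * p * f * (if i = j then 1 else 0) :=
    oneD3P_J_eq p f i
  rw [show (∑ j : OneD3P, J p f i j * v j)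
      = J p f i minus * v minus + J p f i zero * v zero + J p f i plus * v plus from by
    rw [show (Finset.univ : Finset OneD3P) = {minus, zero, plus} from by decide]
    simp (discharger := decide) only [Finset.sum_insert, Finset.sum_singleton]
    ring]
  rw [h minus, h zero, h plus]
  fin_cases i <;> simp <;> linear_combination p * f * hv
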